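/- Let X₁ ⊆ ℝ^{m₁}, …, X_k ⊆ ℝ^{m_k} be nonempty closed sets and, for x = (x¹,…,x^k), let q(x) := ½ Σ_{i=1}^k dist²(xⁱ; X_i) with Euclidean distances. Then q is semi-differentiable everywhere with semi-derivative d q(x)(w¹,…,w^k) = Σ_{i=1}^k min{ ⟨xⁱ − yⁱ, wⁱ⟩ : yⁱ ∈ proj_{X_i}(xⁱ) }, and for all x, y one has the descent estimate q(y) ≤ q(x) + d q(x)(y − x) + (k/2)‖y − x‖². -/

import Mathlib

open Filter Topology Metric Set
open scoped RealInnerProductSpace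

/-- Semi-differentiability with semi-derivative `g`. -/
def HasSemiDerivAt {V W : Type*} [NormedAddCommGroup V] [NormedSpace ℝ V]
    [NormedAddCommGroup W] [NormedSpace ℝ W] (F : V → W) (x : V) (g : V → W) : Prop :=
  ∀ w, Filter.Tendsto (fun p : ℝ × V => (p.1)⁻¹ • (F (x + p.1 • p.2) - F x))
    ((𝓝[>] (0:ℝ)) ×ˢ 𝓝 w) (𝓝 (g w))

/-- Euclidean projection set. -/
noncomputable def projSet {V : Type*} [NormedAddCommGroup V] [NormedSpace ℝ V]
    (X : Set V) (x : V) : Set V :=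
  {y ∈ X | dist x y = Metric.infDist x X}

/-!
For `y ∈ projSet X x`, expanding `‖x + v - y‖²` gives
`d(x + v)² / 2 ≤ d(x)² / 2 + ⟪x - y, v⟫ + ‖v‖² / 2`. With the `y` minimizing `⟪x - y, v⟫` this is
the descent estimate for one set, and with `v = t w'` the upper bound on difference quotients.
Applied at `x + t w'` in direction `-t w'`, it bounds the quotient below by `⟪x - yₜ, w'⟫` for
`yₜ ∈ projSet X (x + t w')`; as `t → 0` the `yₜ` accumulate only on `projSet X x`, by compactness.
Summing over the blocks, `‖yⁱ - xⁱ‖ ≤ ‖y - x‖` produces the factor `k`.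
-/

section HasSemiDerivAt

variable {U V W : Type*} [NormedAddCommGroup U] [NormedSpace ℝ U]
  [NormedAddCommGroup V] [NormedSpace ℝ V] [NormedAddCommGroup W] [NormedSpace ℝ W]

theorem HasSemiDerivAt.comp_continuousLinearMap {f g : U → W} (L : V →L[ℝ] U)
    {x : V} (hf : HasSemiDerivAt f (L x) g) : HasSemiDerivAt (f ∘ L) x (g ∘ L) := by
  intro w
  have hL : Tendsto (fun p : ℝ × V => (p.1, L p.2)) ((𝓝[>] (0:ℝ)) ×ˢ 𝓝 w)
      ((𝓝[>] (0:ℝ)) ×ˢ 𝓝 (L w)) :=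
    tendsto_fst.prodMk ((L.continuous.tendsto w).comp tendsto_snd)
  simp only [Function.comp_apply, map_add, map_smul]
  exact (hf (L w)).comp hL

theorem HasSemiDerivAt.sum {ι : Type*} (s : Finset ι) {f g : ι → V → W} {x : V}
    (hf : ∀ i ∈ s, HasSemiDerivAt (f i) x (g i)) :
    HasSemiDerivAt (fun z => ∑ i ∈ s, f i z) x (fun w => ∑ i ∈ s, g i w) := by
  intro w
  simpa only [Finset.smul_sum, ← Finset.sum_sub_distrib] using
    tendsto_finsetSum s fun i hi => hf i hi w

end HasSemiDerivAt

section ProjSet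

variable {E : Type*} [NormedAddCommGroup E] [InnerProductSpace ℝ E] {X : Set E}

theorem infDist_sq_half_le_of_mem_projSet {x y : E} (hy : y ∈ projSet X x) (v : E) :
    infDist (x + v) X ^ 2 / 2 ≤ infDist x X ^ 2 / 2 + ⟪x - y, v⟫ + ‖v‖ ^ 2 / 2 := by
  have hle : infDist (x + v) X ≤ ‖x - y + v‖ := by
    rw [sub_add_eq_add_sub, ← dist_eq_norm]
    exact infDist_le_dist_of_mem hy.1
  have hx : infDist x X = ‖x - y‖ := by rw [← hy.2, dist_eq_norm]
  have hsq : infDist (x + v) X ^ 2 ≤ ‖x - y + v‖ ^ 2 :=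
    pow_le_pow_left₀ infDist_nonneg hle 2
  rw [hx]
  linarith [norm_add_sq_real (x - y) v]

theorem inner_le_slope_of_mem_projSet {x w y : E} {t : ℝ} (ht : 0 < t)
    (hy : y ∈ projSet X (x + t • w)) :
    ⟪x - y, w⟫ ≤ t⁻¹ * (infDist (x + t • w) X ^ 2 / 2 - infDist x X ^ 2 / 2) := by
  have h := infDist_sq_half_le_of_mem_projSet hy (-(t • w))
  rw [add_neg_cancel_right, inner_neg_right, norm_neg, norm_smul, Real.norm_eq_abs,
    abs_of_pos ht, inner_smul_right, add_sub_right_comm, inner_add_left,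
    real_inner_smul_left, real_inner_self_eq_norm_sq] at h
  rw [le_inv_mul_iff₀ ht]
  nlinarith [sq_nonneg (t * ‖w‖)]

theorem slope_le_of_mem_projSet {x y : E} (hy : y ∈ projSet X x) (w : E) {t : ℝ} (ht : 0 < t) :
    t⁻¹ * (infDist (x + t • w) X ^ 2 / 2 - infDist x X ^ 2 / 2)
      ≤ ⟪x - y, w⟫ + t * ‖w‖ ^ 2 / 2 := by
  have h := infDist_sq_half_le_of_mem_projSet hy (t • w)
  rw [inner_smul_right, norm_smul, Real.norm_eq_abs, abs_of_pos ht] at h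
  rw [inv_mul_le_iff₀ ht]
  nlinarith

theorem dist_le_of_mem_projSet {x u y : E} (hy : y ∈ projSet X u) :
    dist y x ≤ infDist x X + 2 * dist u x := by
  have h1 : dist u y = infDist u X := hy.2
  have h2 : infDist u X ≤ infDist x X + dist u x := infDist_le_infDist_add_dist
  linarith [dist_triangle_left y x u]

theorem mem_projSet_of_tendsto {ι : Type*} {l : Filter ι} [l.NeBot] (hX : IsClosed X)
    {u y : ι → E} {x a : E} (hu : Tendsto u l (𝓝 x)) (hy : Tendsto y l (𝓝 a))
    (hmem : ∀ j, y j ∈ projSet X (u j)) : a ∈ projSet X x := by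
  refine ⟨hX.mem_of_tendsto hy (Eventually.of_forall fun j => (hmem j).1), ?_⟩
  refine tendsto_nhds_unique ((hu.dist hy).congr fun j => (hmem j).2) ?_
  exact ((continuous_infDist_pt X).tendsto x).comp hu

theorem isClosed_projSet (hX : IsClosed X) (x : E) : IsClosed (projSet X x) :=
  hX.inter (isClosed_eq (continuous_const.dist continuous_id) continuous_const)

theorem projSet_subset_closedBall (x : E) : projSet X x ⊆ closedBall x (infDist x X) :=
  fun _ hy => by rw [mem_closedBall, dist_comm]; exact hy.2.le

theorem bddBelow_inner_projSet (x w : E) : BddBelow ((fun y => ⟪x - y, w⟫) '' projSet X x) := by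
  refine ⟨-(infDist x X * ‖w‖), ?_⟩
  rintro _ ⟨y, hy, rfl⟩
  have h := abs_real_inner_le_norm (x - y) w
  rw [← dist_eq_norm, hy.2] at h
  linarith [(abs_le.mp h).1]

variable [ProperSpace E]

theorem projSet_nonempty (hX : IsClosed X) (hne : X.Nonempty) (x : E) :
    (projSet X x).Nonempty := by
  obtain ⟨y, hy, hdy⟩ := hX.exists_infDist_eq_dist hne x
  exact ⟨y, hy, hdy.symm⟩

theorem exists_mem_projSet_sInf_inner_eq (hX : IsClosed X) (hne : X.Nonempty) (x w : E) :
    ∃ y ∈ projSet X x, sInf ((fun y => ⟪x - y, w⟫) '' projSet X x) = ⟪x - y, w⟫ := by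
  have hc : IsCompact (projSet X x) :=
    isCompact_of_isClosed_isBounded (isClosed_projSet hX x)
      (isBounded_closedBall.subset (projSet_subset_closedBall x))
  have hcont : Continuous fun y => ⟪x - y, w⟫ :=
    (continuous_const.sub continuous_id).inner continuous_const
  obtain ⟨y, hy, hmin⟩ := (hc.image hcont).sInf_mem ((projSet_nonempty hX hne x).image _)
  exact ⟨y, hy, hmin.symm⟩

/-- By compactness, nearest points of `X` to points near `x` accumulate only on `projSet X x`. -/
theorem eventually_sInf_inner_sub_lt (hX : IsClosed X) (x w : E) {ε : ℝ} (hε : 0 < ε) :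
    ∀ᶠ q : E × E in 𝓝 (x, w), ∀ y ∈ projSet X q.1,
      sInf ((fun y => ⟪x - y, w⟫) '' projSet X x) - ε < ⟪x - y, q.2⟫ := by
  by_contra hcon
  simp only [not_eventually, not_forall, not_lt, exists_prop] at hcon
  obtain ⟨q, hq, hbad⟩ := frequently_iff_seq_forall.1 hcon
  choose y hy hle using hbad
  have hu : Tendsto (fun j => (q j).1) atTop (𝓝 x) := (continuous_fst.tendsto _).comp hq
  have hw : Tendsto (fun j => (q j).2) atTop (𝓝 w) := (continuous_snd.tendsto _).comp hq
  have hbdd : ∀ᶠ j in atTop, y j ∈ closedBall x (infDist x X + 2) := by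
    filter_upwards [hu.eventually (ball_mem_nhds x one_pos)] with j hj
    exact mem_closedBall.2 ((dist_le_of_mem_projSet (hy j)).trans (by linarith [mem_ball.1 hj]))
  obtain ⟨a, -, φ, hφ, hya⟩ :=
    tendsto_subseq_of_frequently_bounded isBounded_closedBall hbdd.frequently
  have hφ' := hφ.tendsto_atTop
  have haP : a ∈ projSet X x := mem_projSet_of_tendsto hX (hu.comp hφ') hya fun j => hy (φ j)
  have hlim : Tendsto (fun j => ⟪x - y (φ j), (q (φ j)).2⟫) atTop (𝓝 ⟪x - a, w⟫) :=
    (tendsto_const_nhds.sub hya).inner (hw.comp hφ')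
  have hbelow := le_of_tendsto' hlim fun j => hle (φ j)
  linarith [csInf_le (bddBelow_inner_projSet x w) (mem_image_of_mem _ haP)]

theorem hasSemiDerivAt_infDist_sq_half (hX : IsClosed X) (hne : X.Nonempty) (x : E) :
    HasSemiDerivAt (fun z => infDist z X ^ 2 / 2) x
      (fun w => sInf ((fun y => ⟪x - y, w⟫) '' projSet X x)) := by
  intro w
  obtain ⟨y₀, hy₀, hmin⟩ := exists_mem_projSet_sInf_inner_eq hX hne x w
  have hF : 𝓝[>] (0:ℝ) ×ˢ 𝓝 w ≤ 𝓝 ((0:ℝ), w) := by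
    rw [nhds_prod_eq]; exact prod_mono nhdsWithin_le_nhds le_rfl
  have hpos : ∀ᶠ p : ℝ × E in 𝓝[>] 0 ×ˢ 𝓝 w, 0 < p.1 :=
    tendsto_fst.eventually self_mem_nhdsWithin
  have hmove : Tendsto (fun p : ℝ × E => (x + p.1 • p.2, p.2)) (𝓝[>] 0 ×ˢ 𝓝 w) (𝓝 (x, w)) := by
    simpa using ((Continuous.tendsto (by fun_prop) ((0:ℝ), w)).mono_left hF :
      Tendsto (fun p : ℝ × E => (x + p.1 • p.2, p.2)) _ _)
  have hupper : Tendsto (fun p : ℝ × E => ⟪x - y₀, p.2⟫ + p.1 * ‖p.2‖ ^ 2 / 2)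
      (𝓝[>] 0 ×ˢ 𝓝 w) (𝓝 ⟪x - y₀, w⟫) := by
    simpa using ((Continuous.tendsto (by fun_prop) ((0:ℝ), w)).mono_left hF :
      Tendsto (fun p : ℝ × E => ⟪x - y₀, p.2⟫ + p.1 * ‖p.2‖ ^ 2 / 2) _ _)
  refine tendsto_order.2 ⟨fun a ha => ?_, fun b hb => ?_⟩
  · filter_upwards [hpos, hmove.eventually (eventually_sInf_inner_sub_lt hX x w (sub_pos.2 ha))]
      with p ht hp
    obtain ⟨y, hy⟩ := projSet_nonempty hX hne (x + p.1 • p.2)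
    rw [smul_eq_mul]
    linarith [inner_le_slope_of_mem_projSet ht hy, hp y hy]
  · replace hb : ⟪x - y₀, w⟫ < b := hmin ▸ hb
    filter_upwards [hpos, hupper.eventually (gt_mem_nhds hb)] with p ht hp
    rw [smul_eq_mul]
    linarith [slope_le_of_mem_projSet hy₀ p.2 ht]

theorem infDist_sq_half_le_add_sInf_inner (hX : IsClosed X) (hne : X.Nonempty) (x v : E) :
    infDist (x + v) X ^ 2 / 2
      ≤ infDist x X ^ 2 / 2 + sInf ((fun y => ⟪x - y, v⟫) '' projSet X x) + ‖v‖ ^ 2 / 2 := by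
  obtain ⟨y, hy, hmin⟩ := exists_mem_projSet_sInf_inner_eq hX hne x v
  rw [hmin]
  exact infDist_sq_half_le_of_mem_projSet hy v

end ProjSet

/-- Separable sum of squared distances: for nonempty closed sets `Xᵢ ⊆ ℝ^{mᵢ}`, the function
`q(x) = ½ Σᵢ dist²(xⁱ; Xᵢ)` on the (L²-)product space is semi-differentiable everywhere with
semi-derivative `w ↦ Σᵢ min{⟨xⁱ − yⁱ, wⁱ⟩ : yⁱ ∈ proj_{Xᵢ}(xⁱ)}`, and satisfies the descent
estimate `q(y) ≤ q(x) + d q(x)(y − x) + (k/2)‖y − x‖²`. -/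
theorem stmt5 {k : ℕ} {m : Fin k → ℕ}
    (X : ∀ i, Set (EuclideanSpace ℝ (Fin (m i))))
    (hX : ∀ i, IsClosed (X i)) (hne : ∀ i, (X i).Nonempty) :
    (∀ x : PiLp 2 (fun i => EuclideanSpace ℝ (Fin (m i))),
      HasSemiDerivAt (fun z => (∑ i, infDist (z i) (X i) ^ 2) / 2) x
        (fun w => ∑ i, sInf ((fun y => (inner ℝ (x i - y) (w i) : ℝ)) '' projSet (X i) (x i)))) ∧
    (∀ x y : PiLp 2 (fun i => EuclideanSpace ℝ (Fin (m i))),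
      (∑ i, infDist (y i) (X i) ^ 2) / 2 ≤ (∑ i, infDist (x i) (X i) ^ 2) / 2
        + (∑ i, sInf ((fun z => (inner ℝ (x i - z) (y i - x i) : ℝ)) '' projSet (X i) (x i)))
        + (k / 2 : ℝ) * ‖y - x‖ ^ 2) := by
  refine ⟨fun x => ?_, fun x y => ?_⟩
  · have hsum := HasSemiDerivAt.sum Finset.univ fun i _ =>
      HasSemiDerivAt.comp_continuousLinearMap
        (PiLp.proj 2 (fun i => EuclideanSpace ℝ (Fin (m i))) i)
        (hasSemiDerivAt_infDist_sq_half (hX i) (hne i) (x i))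
    simp only [Function.comp_apply, PiLp.proj_apply] at hsum
    simpa only [Finset.sum_div] using hsum
  · have hterm : ∀ i, infDist (y i) (X i) ^ 2 / 2 ≤ infDist (x i) (X i) ^ 2 / 2
        + sInf ((fun z => ⟪x i - z, y i - x i⟫) '' projSet (X i) (x i)) + ‖y - x‖ ^ 2 / 2 := by
      intro i
      have h := infDist_sq_half_le_add_sInf_inner (hX i) (hne i) (x i) (y i - x i)
      rw [add_sub_cancel] at h
      have hcoord : ‖y i - x i‖ ≤ ‖y - x‖ := PiLp.norm_apply_le (y - x) i
      nlinarith [norm_nonneg (y i - x i)]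
    calc (∑ i, infDist (y i) (X i) ^ 2) / 2 = ∑ i, infDist (y i) (X i) ^ 2 / 2 :=
          Finset.sum_div _ _ _
      _ ≤ ∑ i, (infDist (x i) (X i) ^ 2 / 2
          + sInf ((fun z => ⟪x i - z, y i - x i⟫) '' projSet (X i) (x i)) + ‖y - x‖ ^ 2 / 2) :=
          Finset.sum_le_sum fun i _ => hterm i
      _ = _ := by
          simp only [Finset.sum_add_distrib, Finset.sum_div, Finset.sum_const, Finset.card_univ,
            Fintype.card_fin, nsmul_eq_mul]
          ring
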